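/- arXiv:2502.12491 — 4 statements merged into one kernel-verified Lean document; each statement's English description precedes it below -/
import Mathlib

section
/- Let n ∈ ℕ, s₀, s₁ : Fin n → 𝔽₂, x ∈ 𝔽₂, let ψ be the signed key state and α its Hadamard-basis measurement amplitude. Then for every outcome (c, d) ∈ 𝔽₂ × (Fin n → 𝔽₂), α(c, d) ≠ 0 if and only if c + d·(s₀ + s₁) = x in 𝔽₂. (Support characterization of Hadamard-basis measurement outcomes of a leased-key block; this is the algebraic core of the verification procedure of the SKE-CR-SKL scheme.) -/
open Finset

noncomputable section

/-- χ(a) ∈ ℂ equals 1 if a = 0 and −1 if a = 1, for a ∈ 𝔽₂. -/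
def chi (a : ZMod 2) : ℂ := if a = 0 then 1 else -1

/-- Inner product d·u = ∑ᵢ (d i)·(u i) over 𝔽₂. -/
def dotF2 {n : ℕ} (d u : Fin n → ZMod 2) : ZMod 2 := ∑ i, d i * u i

/-- The signed key state ψ(b, u). -/
def signedKeyState (n : ℕ) (s₀ s₁ : Fin n → ZMod 2) (x : ZMod 2) :
    ZMod 2 × (Fin n → ZMod 2) → ℂ := fun p =>
  (1 / (Real.sqrt 2 : ℂ)) * (if p.1 = 0 ∧ p.2 = s₀ then 1 else 0)
    + (chi x / (Real.sqrt 2 : ℂ)) * (if p.1 = 1 ∧ p.2 = s₁ then 1 else 0)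

/-- The Hadamard-basis measurement amplitude
    α(c, d) = 2^{−(n+1)/2} · ∑_{(b,u)} χ(c·b + d·u) · ψ(b, u). -/
def hadamardAmp (n : ℕ) (s₀ s₁ : Fin n → ZMod 2) (x : ZMod 2)
    (c : ZMod 2) (d : Fin n → ZMod 2) : ℂ :=
  (1 / (Real.sqrt (2 ^ (n + 1)) : ℂ)) *
    ∑ p : ZMod 2 × (Fin n → ZMod 2),
      chi (c * p.1 + dotF2 d p.2) * signedKeyState n s₀ s₁ x p

lemma zmod2_cases (a : ZMod 2) : a = 0 ∨ a = 1 := by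
  revert a; decide

lemma chi_add (a b : ZMod 2) : chi (a + b) = chi a * chi b := by
  rcases zmod2_cases a with ha | ha <;> rcases zmod2_cases b with hb | hb <;>
    subst ha <;> subst hb <;>
    norm_num [chi, show (1 + 1 : ZMod 2) = 0 from by decide] <;> decide

lemma chi_add_ne_zero_iff (a b : ZMod 2) : chi a + chi b ≠ 0 ↔ a = b := by
  rcases zmod2_cases a with ha | ha <;> rcases zmod2_cases b with hb | hb <;>
    subst ha <;> subst hb <;>
    norm_num [chi, show (0 : ZMod 2) ≠ 1 from by decide]

lemma key_sum (n : ℕ) (s₀ s₁ : Fin n → ZMod 2) (x : ZMod 2)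
    (c : ZMod 2) (d : Fin n → ZMod 2) :
    ∑ p : ZMod 2 × (Fin n → ZMod 2),
      chi (c * p.1 + dotF2 d p.2) * signedKeyState n s₀ s₁ x p
    = (1 / (Real.sqrt 2 : ℂ)) *
        (chi (dotF2 d s₀) + chi (c + dotF2 d s₁ + x)) := by
  have hterm : ∀ p : ZMod 2 × (Fin n → ZMod 2),
      chi (c * p.1 + dotF2 d p.2) * signedKeyState n s₀ s₁ x p
      = (if p = ((0 : ZMod 2), s₀) then
          (1 / (Real.sqrt 2 : ℂ)) * chi (dotF2 d s₀) else 0)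
        + (if p = ((1 : ZMod 2), s₁) then
          (1 / (Real.sqrt 2 : ℂ)) * chi (c + dotF2 d s₁ + x) else 0) := by
    rintro ⟨b, u⟩
    simp only [signedKeyState, Prod.mk.injEq]
    by_cases hb0 : b = 0
    · subst hb0
      by_cases hu : u = s₀ <;>
        simp [hu, Prod.ext_iff, mul_add, chi_add, mul_comm, mul_assoc]
    · have hb1 : b = 1 := (zmod2_cases b).resolve_left hb0
      subst hb1
      by_cases hu : u = s₁ <;>
        simp [hu, Prod.ext_iff, mul_add, chi_add, div_eq_mul_inv] <;> ring
  rw [Finset.sum_congr rfl fun p _ => hterm p, Finset.sum_add_distrib,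
    Finset.sum_ite_eq' Finset.univ, Finset.sum_ite_eq' Finset.univ]
  simp [mul_add]

/-- Support characterization of Hadamard-basis measurement outcomes of a leased-key
block: α(c, d) ≠ 0 iff c + d·(s₀ + s₁) = x in 𝔽₂. -/
theorem hadamardAmp_ne_zero_iff (n : ℕ) (s₀ s₁ : Fin n → ZMod 2) (x : ZMod 2)
    (c : ZMod 2) (d : Fin n → ZMod 2) :
    hadamardAmp n s₀ s₁ x c d ≠ 0 ↔ c + dotF2 d (s₀ + s₁) = x := by
  have hs : Real.sqrt 2 ≠ 0 := by positivity
  have hs' : Real.sqrt (2 ^ (n + 1)) ≠ 0 := by positivity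
  rw [hadamardAmp, key_sum]
  have h1 : (1 / (Real.sqrt (2 ^ (n + 1)) : ℂ)) ≠ 0 := by
    simp [Complex.ofReal_ne_zero, hs']
  have h2 : (1 / (Real.sqrt 2 : ℂ)) ≠ 0 := by
    simp [Complex.ofReal_ne_zero, hs]
  rw [mul_ne_zero_iff, mul_ne_zero_iff, and_iff_right h1, and_iff_right h2,
    chi_add_ne_zero_iff]
  have hdot : dotF2 d (s₀ + s₁) = dotF2 d s₀ + dotF2 d s₁ := by
    simp [dotF2, mul_add, Finset.sum_add_distrib]
  rw [hdot]
  have hall : ∀ a b c x : ZMod 2, (a = c + b + x ↔ c + (a + b) = x) := by decide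
  exact hall _ _ _ _
end
end

section
/- Let n ∈ ℕ, s₀, s₁ : Fin n → 𝔽₂, x ∈ 𝔽₂, let ψ be the signed key state and α its Hadamard-basis measurement amplitude. Then the sum of |α(c, d)|² over all pairs (c, d) ∈ 𝔽₂ × (Fin n → 𝔽₂) satisfying c + d·(s₀ + s₁) = x equals 1. (Verification correctness: measuring the honest leased-key block in the Hadamard basis yields, with probability 1, an outcome (c, d) satisfying x = c ⊕ d·(s₀ ⊕ s₁), so the honest decryption key passes the verification check of the SKE-CR-SKL scheme.) -/
open Finset

noncomputable section

lemma chi_mul_chi (a : ZMod 2) : chi a * chi a = 1 := by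
  fin_cases a <;> simp [chi] <;> split_ifs <;> simp_all

lemma abs_chi (a : ZMod 2) : ‖chi a‖ = 1 := by
  fin_cases a <;> simp [chi] <;> split_ifs <;> simp_all

lemma dot_add {n : ℕ} (d u v : Fin n → ZMod 2) :
    dotF2 d (u + v) = dotF2 d u + dotF2 d v := by
  simp [dotF2, mul_add, Finset.sum_add_distrib]

lemma hadamardAmp_eq (n : ℕ) (s₀ s₁ : Fin n → ZMod 2) (x : ZMod 2)
    (c : ZMod 2) (d : Fin n → ZMod 2) :
    hadamardAmp n s₀ s₁ x c d = (1 / (Real.sqrt (2 ^ (n + 1)) : ℂ)) *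
      (chi (dotF2 d s₀) * (1 / (Real.sqrt 2 : ℂ))
        + chi (c + dotF2 d s₁) * (chi x / (Real.sqrt 2 : ℂ))) := by
  unfold hadamardAmp
  congr 1
  rw [← Finset.sum_subset (Finset.subset_univ ({((0 : ZMod 2), s₀), ((1 : ZMod 2), s₁)} : Finset _))]
  · rw [Finset.sum_pair (by simp : ((0 : ZMod 2), s₀) ≠ ((1 : ZMod 2), s₁))]
    simp [signedKeyState]
  · intro p _ hp
    simp only [Finset.mem_insert, Finset.mem_singleton] at hp
    push_neg at hp
    have h0 : ¬(p.1 = 0 ∧ p.2 = s₀) := by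
      rintro ⟨h1, h2⟩; exact hp.1 (Prod.ext h1 h2)
    have h1 : ¬(p.1 = 1 ∧ p.2 = s₁) := by
      rintro ⟨h1, h2⟩; exact hp.2 (Prod.ext h1 h2)
    simp [signedKeyState, h0, h1]

lemma amp_accept (n : ℕ) (s₀ s₁ : Fin n → ZMod 2) (x : ZMod 2)
    (c : ZMod 2) (d : Fin n → ZMod 2) (h : c + dotF2 d (s₀ + s₁) = x) :
    ‖hadamardAmp n s₀ s₁ x c d‖ ^ 2 = 1 / 2 ^ n := by
  rw [hadamardAmp_eq]
  have hlin := dot_add d s₀ s₁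
  have hc : c + dotF2 d s₁ = x + dotF2 d s₀ := by
    rw [hlin] at h
    revert h; generalize dotF2 d s₀ = a; generalize dotF2 d s₁ = b
    revert c x a b; decide
  rw [hc, chi_add, mul_comm (chi x) (chi (dotF2 d s₀))]
  have : chi (dotF2 d s₀) * chi x * (chi x / (Real.sqrt 2 : ℂ))
      = chi (dotF2 d s₀) * (1 / (Real.sqrt 2 : ℂ)) := by
    field_simp
    ring_nf
    rw [sq, chi_mul_chi, mul_one]
  rw [this, ← two_mul]
  have hs1 : Real.sqrt (2 ^ (n + 1)) ≥ 0 := Real.sqrt_nonneg _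
  have hs2 : Real.sqrt 2 ≥ 0 := Real.sqrt_nonneg _
  have h1 : (Real.sqrt (2 ^ (n + 1))) ^ 2 = 2 ^ (n + 1) := Real.sq_sqrt (by positivity)
  have h2 : (Real.sqrt 2) ^ 2 = 2 := Real.sq_sqrt (by norm_num)
  simp only [norm_mul, norm_div, norm_one, abs_chi, Complex.norm_real, Real.norm_eq_abs,
    abs_of_nonneg hs1, abs_of_nonneg hs2]
  rw [Complex.norm_two, one_mul, mul_pow, mul_pow, div_pow, div_pow, h1, h2, pow_succ]
  field_simp
  ring

/-- Verification correctness: the total probability of outcomes (c, d) satisfying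
c + d·(s₀ + s₁) = x equals 1. -/
theorem hadamardAmp_accept_prob_one (n : ℕ) (s₀ s₁ : Fin n → ZMod 2) (x : ZMod 2) :
    ∑ p ∈ Finset.univ.filter
        (fun p : ZMod 2 × (Fin n → ZMod 2) => p.1 + dotF2 p.2 (s₀ + s₁) = x),
      ‖hadamardAmp n s₀ s₁ x p.1 p.2‖ ^ 2 = 1 := by
  have key : ∀ a b y : ZMod 2, a + b = y → y + b = a := by decide
  have hsum : ∑ p ∈ Finset.univ.filter
        (fun p : ZMod 2 × (Fin n → ZMod 2) => p.1 + dotF2 p.2 (s₀ + s₁) = x),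
      ‖hadamardAmp n s₀ s₁ x p.1 p.2‖ ^ 2
      = ∑ _d : Fin n → ZMod 2, (1 : ℝ) / 2 ^ n := by
    apply Finset.sum_nbij' (i := fun p => p.2)
      (j := fun d => (x + dotF2 d (s₀ + s₁), d))
    · intro p _; exact Finset.mem_univ _
    · intro d _
      simp only [Finset.mem_filter, Finset.mem_univ, true_and]
      generalize dotF2 d (s₀ + s₁) = a
      revert a; revert x; decide
    · intro p hp
      simp only [Finset.mem_filter, Finset.mem_univ, true_and] at hp
      exact Prod.ext (key _ _ _ hp) rfl
    · intro d _; rfl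
    · intro p hp
      simp only [Finset.mem_filter, Finset.mem_univ, true_and] at hp
      exact amp_accept n s₀ s₁ x p.1 p.2 hp
  rw [hsum, Finset.sum_const, Finset.card_univ]
  have : Fintype.card (Fin n → ZMod 2) = 2 ^ n := by
    simp [Fintype.card_fun]
  rw [this, nsmul_eq_mul]
  push_cast
  field_simp


end
end

section
/- Let n ∈ ℕ, s₀, s₁ : Fin n → 𝔽₂, x ∈ 𝔽₂, let ψ be the signed key state and α its Hadamard-basis measurement amplitude. Then for every pair (c, d) ∈ 𝔽₂ × (Fin n → 𝔽₂) with c + d·(s₀ + s₁) = x one has |α(c, d)|² = 2^{−n}, and the set of such pairs (c, d) has exactly 2^n elements. (Each valid deletion certificate occurs with probability exactly 2^{−n}, uniformly over the 2^n accepting outcomes.) -/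
open Finset

noncomputable section

lemma psi_eq (n : ℕ) (s₀ s₁ : Fin n → ZMod 2) (x : ZMod 2) (p : ZMod 2 × (Fin n → ZMod 2)) :
    signedKeyState n s₀ s₁ x p
    = (if p = (0, s₀) then (1 / (Real.sqrt 2 : ℂ)) else 0)
      + (if p = (1, s₁) then (chi x / (Real.sqrt 2 : ℂ)) else 0) := by
  simp [signedKeyState, Prod.ext_iff, mul_ite]

lemma sum_eval (n : ℕ) (s₀ s₁ : Fin n → ZMod 2) (x : ZMod 2)
    (c : ZMod 2) (d : Fin n → ZMod 2) :
    ∑ p : ZMod 2 × (Fin n → ZMod 2),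
      chi (c * p.1 + dotF2 d p.2) * signedKeyState n s₀ s₁ x p
    = chi (dotF2 d s₀) * (1 / (Real.sqrt 2 : ℂ))
      + chi (c + dotF2 d s₁) * (chi x / (Real.sqrt 2 : ℂ)) := by
  simp only [psi_eq, mul_add, Finset.sum_add_distrib, mul_ite, mul_zero,
    Finset.sum_ite_eq' Finset.univ, mem_univ, if_true]
  norm_num

/-- Each valid deletion certificate occurs with probability exactly 2^{−n},
uniformly over the 2^n accepting outcomes. -/
theorem hadamardAmp_uniform_on_accepting (n : ℕ) (s₀ s₁ : Fin n → ZMod 2) (x : ZMod 2) :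
    (∀ (c : ZMod 2) (d : Fin n → ZMod 2), c + dotF2 d (s₀ + s₁) = x →
        ‖hadamardAmp n s₀ s₁ x c d‖ ^ 2 = ((2 : ℝ) ^ n)⁻¹) ∧
    (Finset.univ.filter
        (fun p : ZMod 2 × (Fin n → ZMod 2) => p.1 + dotF2 p.2 (s₀ + s₁) = x)).card
      = 2 ^ n := by
  constructor
  · intro c d h
    have hdot : dotF2 d (s₀ + s₁) = dotF2 d s₀ + dotF2 d s₁ := by
      simp [dotF2, mul_add, Finset.sum_add_distrib]
    rw [hdot] at h
    have h2 : ∀ a : ZMod 2, a + a = 0 := by decide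
    have hc : c + dotF2 d s₁ = x + dotF2 d s₀ := by
      linear_combination h - h2 (dotF2 d s₀)
    have hx2 : chi x * chi x = 1 := by obtain rfl | rfl := (by decide : ∀ a : ZMod 2, a = 0 ∨ a = 1) x <;> simp [chi]
    have hsum : chi (c + dotF2 d s₁) * chi x = chi (dotF2 d s₀) := by
      rw [hc, chi_add]
      linear_combination chi (dotF2 d s₀) * hx2
    rw [hadamardAmp, sum_eval]
    have e1 : chi (dotF2 d s₀) * (1 / (Real.sqrt 2 : ℂ))
        + chi (c + dotF2 d s₁) * (chi x / (Real.sqrt 2 : ℂ))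
        = chi (dotF2 d s₀) * (2 / (Real.sqrt 2 : ℂ)) := by
      field_simp
      linear_combination hsum
    rw [e1, norm_mul, norm_mul, abs_chi, norm_div, norm_div]
    simp only [norm_one, Complex.norm_ofNat, Complex.norm_real, Real.norm_eq_abs]
    rw [abs_of_nonneg (Real.sqrt_nonneg _), abs_of_nonneg (Real.sqrt_nonneg _), one_mul]
    rw [mul_pow, div_pow, div_pow, one_pow,
      Real.sq_sqrt (by positivity : (0:ℝ) ≤ 2 ^ (n+1)),
      Real.sq_sqrt (by norm_num : (0:ℝ) ≤ 2), pow_succ]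
    have : (0:ℝ) < 2 ^ n := by positivity
    field_simp
  · have hcard : (Finset.univ.filter
        (fun p : ZMod 2 × (Fin n → ZMod 2) => p.1 + dotF2 p.2 (s₀ + s₁) = x)).card
        = (Finset.univ : Finset (Fin n → ZMod 2)).card := by
      apply Finset.card_bij (fun p _ => p.2)
      · intros; simp
      · rintro ⟨c₁, d₁⟩ h₁ ⟨c₂, d₂⟩ h₂ (hd : d₁ = d₂)
        subst hd
        simp only [mem_filter] at h₁ h₂
        have : c₁ = c₂ := by
          have e := h₁.2.trans h₂.2.symm
          exact add_right_cancel e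
        simp [this]
      · intro d _
        refine ⟨(x + dotF2 d (s₀ + s₁), d), ?_, rfl⟩
        simp only [mem_filter, mem_univ, true_and]
        have h2 : ∀ a : ZMod 2, a + a = 0 := by decide
        rw [add_assoc, h2, add_zero]
    rw [hcard, Finset.card_univ]
    simp [Fintype.card_fun, ZMod.card]

end
end

section
/- Let n ∈ ℕ, s₀, s₁ : Fin n → 𝔽₂ with s₀ ≠ s₁, x ∈ 𝔽₂, let ψ be the signed key state, let q ≥ 1, and let Ψ(w) = ∏_j ψ(w j) on Fin q → 𝔽₂ × (Fin n → 𝔽₂). Let Φ be Ψ restricted to the set G = { w : ∃ j, w j = (0, s₀) }, i.e. Φ(w) = Ψ(w) for w ∈ G and Φ(w) = 0 otherwise. Then ∑_w |Φ(w)|² = 1 − 2^{−q}, and the squared ℓ²-distance between Ψ and the renormalized state Φ/√(1 − 2^{−q}) equals 2 − 2·√(1 − 2^{−q}), which is at most 2^{1−q}. (The gentle-measurement step of the collusion attack in Section 2.2: one can extract s₀ from q copies of the leased key by a measurement that disturbs the joint state by at most a 2^{−Ω(q)} amount in ℓ²-distance, allowing the adversary to pass verification while keeping the key.) -/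
open Finset

noncomputable section

lemma abs_signed (n : ℕ) (s₀ s₁ : Fin n → ZMod 2) (hs : s₀ ≠ s₁) (x : ZMod 2)
    (p : ZMod 2 × (Fin n → ZMod 2)) :
    ‖signedKeyState n s₀ s₁ x p‖ ^ 2 =
      (if p = ((0 : ZMod 2), s₀) then (1/2 : ℝ) else 0) +
      (if p = ((1 : ZMod 2), s₁) then (1/2 : ℝ) else 0) := by
  obtain ⟨b, u⟩ := p
  have hs2 : Real.sqrt 2 > 0 := by positivity
  have hsq : (Real.sqrt 2) ^ 2 = 2 := Real.sq_sqrt (by norm_num)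
  have hchi : ‖chi x‖ = 1 := by
    unfold chi; split <;> simp
  have h01 : (0 : ZMod 2) ≠ 1 := by decide
  rcases (show ∀ b : ZMod 2, b = 0 ∨ b = 1 by decide) b with rfl | rfl
  · by_cases hu : u = s₀
    · subst hu
      simp only [signedKeyState, Prod.mk.injEq]
      norm_num [h01]
    · simp only [signedKeyState, Prod.mk.injEq]
      norm_num [hu, h01]
  · by_cases hu : u = s₁
    · subst hu
      have hne : u ≠ s₀ := fun h => hs h.symm
      simp only [signedKeyState, Prod.mk.injEq]
      norm_num [hne, h01.symm]
      rw [hchi, abs_of_pos hs2, div_pow, hsq]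
      norm_num
    · simp only [signedKeyState, Prod.mk.injEq]
      norm_num [hu, h01.symm]

/-- The gentle-measurement step of the collusion attack of Section 2.2: projecting q
copies of the leased key onto the branches containing s₀ keeps squared norm
1 − 2^{−q}, and the renormalized post-measurement state is within squared
ℓ²-distance 2 − 2·√(1 − 2^{−q}) ≤ 2^{1−q} of the original state. -/
theorem gentle_measurement_collusion (n : ℕ) (s₀ s₁ : Fin n → ZMod 2) (hs : s₀ ≠ s₁)
    (x : ZMod 2) (q : ℕ) (hq : 1 ≤ q)
    (Ψ : (Fin q → ZMod 2 × (Fin n → ZMod 2)) → ℂ)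
    (hΨ : ∀ w, Ψ w = ∏ j, signedKeyState n s₀ s₁ x (w j))
    (Φ : (Fin q → ZMod 2 × (Fin n → ZMod 2)) → ℂ)
    (hΦ : ∀ w, Φ w = if ∃ j, w j = (0, s₀) then Ψ w else 0) :
    (∑ w, ‖Φ w‖ ^ 2 = 1 - ((2 : ℝ) ^ q)⁻¹) ∧
    (∑ w, ‖Ψ w - Φ w / ((Real.sqrt (1 - ((2 : ℝ) ^ q)⁻¹) : ℝ) : ℂ)‖ ^ 2
        = 2 - 2 * Real.sqrt (1 - ((2 : ℝ) ^ q)⁻¹)) ∧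
    2 - 2 * Real.sqrt (1 - ((2 : ℝ) ^ q)⁻¹) ≤ 2 * ((2 : ℝ) ^ q)⁻¹ := by
  set A : ZMod 2 × (Fin n → ZMod 2) := ((0 : ZMod 2), s₀) with hA
  set B : ZMod 2 × (Fin n → ZMod 2) := ((1 : ZMod 2), s₁) with hB
  set g : ZMod 2 × (Fin n → ZMod 2) → ℝ :=
    fun p => ‖signedKeyState n s₀ s₁ x p‖ ^ 2 with hgdef
  set g' : ZMod 2 × (Fin n → ZMod 2) → ℝ :=
    fun p => if p = A then 0 else g p with hg'def
  set ε : ℝ := ((2 : ℝ) ^ q)⁻¹ with hεdef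
  have hAB : A ≠ B := by
    intro h
    have h1 : (0 : ZMod 2) = 1 := congrArg Prod.fst h
    exact absurd h1 (by decide)
  have hg : ∀ p, g p = (if p = A then (1/2 : ℝ) else 0) + (if p = B then (1/2:ℝ) else 0) :=
    fun p => abs_signed n s₀ s₁ hs x p
  have hsumg : ∑ p, g p = 1 := by
    simp only [hg, Finset.sum_add_distrib, Finset.sum_ite_eq' Finset.univ,
      Finset.mem_univ, if_true]
    norm_num
  have hsumg' : ∑ p, g' p = 1/2 := by
    have : ∀ p, g' p = (if p = B then (1/2:ℝ) else 0) := by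
      intro p
      by_cases hp : p = A
      · simp [hg'def, hp, hAB]
      · simp [hg'def, hp, hg p, hp]
    simp only [this, Finset.sum_ite_eq' Finset.univ, Finset.mem_univ, if_true]
  have Stot : ∑ w : Fin q → ZMod 2 × (Fin n → ZMod 2), ∏ j, g (w j) = 1 := by
    rw [← Fintype.sum_pow, hsumg, one_pow]
  have Sbad : ∑ w : Fin q → ZMod 2 × (Fin n → ZMod 2), ∏ j, g' (w j) = ε := by
    rw [← Fintype.sum_pow, hsumg', hεdef, div_pow, one_pow, one_div]
  have absΨ : ∀ w, ‖Ψ w‖ ^ 2 = ∏ j, g (w j) := by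
    intro w
    rw [hΨ, norm_prod, ← Finset.prod_pow]
  have hprod' : ∀ w : Fin q → ZMod 2 × (Fin n → ZMod 2), ∏ j, g' (w j) =
      if (∃ j, w j = A) then 0 else ∏ j, g (w j) := by
    intro w
    by_cases hw : ∃ j, w j = A
    · obtain ⟨j, hj⟩ := hw
      rw [if_pos ⟨j, hj⟩]
      exact Finset.prod_eq_zero (Finset.mem_univ j) (by simp [hg'def, hj])
    · rw [if_neg hw]
      refine Finset.prod_congr rfl fun j _ => ?_
      show (if w j = A then 0 else g (w j)) = g (w j)
      exact if_neg (fun h => hw ⟨j, h⟩)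
  -- positivity facts
  have h2q : (2:ℝ) ≤ 2 ^ q := by
    calc (2:ℝ) = 2 ^ 1 := (pow_one 2).symm
    _ ≤ 2 ^ q := pow_le_pow_right₀ (by norm_num) hq
  have hεpos : 0 < ε := by positivity
  have hεhalf : ε ≤ 1/2 := by
    rw [hεdef]
    rw [inv_le_comm₀ (by positivity) (by norm_num)]
    linarith
  have h1ε : (0:ℝ) < 1 - ε := by linarith
  set c : ℝ := Real.sqrt (1 - ε) with hcdef
  have hc : 0 < c := Real.sqrt_pos.mpr h1ε
  have hc2 : c ^ 2 = 1 - ε := Real.sq_sqrt (le_of_lt h1ε)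
  -- first claim
  have claim1 : ∑ w, ‖Φ w‖ ^ 2 = 1 - ε := by
    have hpt : ∀ w, ‖Φ w‖ ^ 2 = ∏ j, g (w j) - ∏ j, g' (w j) := by
      intro w
      rw [hΦ, hprod']
      by_cases hw : ∃ j, w j = A
      · rw [if_pos hw, if_pos hw, absΨ, sub_zero]
      · rw [if_neg hw, if_neg hw, sub_self, norm_zero]
        norm_num
    rw [Finset.sum_congr rfl fun w _ => hpt w, Finset.sum_sub_distrib, Stot, Sbad]
  refine ⟨claim1, ?_, ?_⟩
  · -- second claim
    set a : ℝ := (1 - 1/c)^2 with hadef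
    have hpt : ∀ w, ‖Ψ w - Φ w / (c : ℂ)‖ ^ 2 =
        a * ∏ j, g (w j) + (∏ j, g' (w j)) - a * ∏ j, g' (w j) := by
      intro w
      rw [hΦ, hprod']
      by_cases hw : ∃ j, w j = A
      · rw [if_pos hw, if_pos hw, mul_zero, add_zero, sub_zero]
        have : Ψ w - Ψ w / (c:ℂ) = Ψ w * ((1 - 1/c : ℝ) : ℂ) := by
          push_cast
          ring
        rw [this, norm_mul, mul_pow, Complex.norm_real, Real.norm_eq_abs, sq_abs, absΨ, hadef]
        ring
      · rw [if_neg hw, if_neg hw, zero_div, sub_zero, absΨ]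
        ring
    rw [Finset.sum_congr rfl fun w _ => hpt w]
    simp only [Finset.sum_sub_distrib, Finset.sum_add_distrib, ← Finset.mul_sum]
    rw [Stot, Sbad, mul_one]
    -- a + ε - a * ε = 2 - 2c
    have h0 : (1 - 1/c) * c = c - 1 := by field_simp
    have hkey : a * c^2 = (c - 1)^2 := by rw [hadef, ← mul_pow, h0]
    nlinarith [hkey, hc2]
  · -- inequality
    have hle : 1 - ε ≤ c := by
      have h := Real.sqrt_le_sqrt (show (1-ε)^2 ≤ 1-ε by nlinarith)
      rwa [Real.sqrt_sq (le_of_lt h1ε)] at h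
    linarith

end
end
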